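/- For each codeword x_i with P_X(x_i) > 0, the function J_i(D) = E_{y∼p_Y}[log D(x_i,y)] + P_X(x_i) E_{y∼p_{Y|X}(·|x_i)}[log(1 - D(x_i,y))] is maximized (pointwise in y, a.e. where p_Y(y) > 0) by D*(x_i,y) = p_Y(y) / (p_Y(y) + P_X(x_i) p_{Y|X}(y|x_i)). -/

import Mathlib

open MeasureTheory

/-!
For fixed `y` the integrand `a log d + b log (1 - d)` (with `a = p_Y(y)`, `b = P_X(xᵢ) p_{Y|X}(y|xᵢ)`)
is a weighted cross entropy of the two-point distributions `(a, b) / (a + b)` and `(d, 1 - d)`.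
By `log t ≤ t - 1` applied to both terms it is at most the weighted entropy, attained at
`d = a / (a + b)` (Gibbs' inequality).
-/

namespace Real

theorem mul_log_le_mul_log_div_add {a c x : ℝ} (ha : 0 ≤ a) (hc : 0 < c) (hx : 0 < x) :
    a * log x ≤ a * log (a / c) + (c * x - a) := by
  rcases ha.eq_or_lt with rfl | ha
  · simp only [zero_mul, zero_div, log_zero, sub_zero, zero_add]
    positivity
  · have key : log (c * x / a) ≤ c * x / a - 1 := log_le_sub_one_of_pos (by positivity)
    rw [log_div (by positivity) ha.ne', log_mul hc.ne' hx.ne'] at key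
    rw [log_div ha.ne' hc.ne']
    have hscale : a * (c * x / a - 1) = c * x - a := by field_simp
    nlinarith [mul_le_mul_of_nonneg_left key ha.le]

theorem mul_log_add_mul_log_one_sub_le {a b d : ℝ} (ha : 0 ≤ a) (hb : 0 ≤ b) (hab : 0 < a + b)
    (hd₀ : 0 < d) (hd₁ : d < 1) :
    a * log d + b * log (1 - d) ≤
      a * log (a / (a + b)) + b * log (1 - a / (a + b)) := by
  have hcompl : 1 - a / (a + b) = b / (a + b) := by field_simp; ring
  rw [hcompl]
  have h₁ := mul_log_le_mul_log_div_add ha hab hd₀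
  have h₂ := mul_log_le_mul_log_div_add hb hab (sub_pos.2 hd₁)
  linarith

end Real

theorem stmt_8_general {Y : Type*} [MeasurableSpace Y] (ν : Measure Y)
    (pY pcondi : Y → ℝ) (PXi : ℝ) (hPXi : 0 < PXi)
    (hpcond : ∀ y, 0 ≤ pcondi y) :
    ∀ᵐ y ∂ν, 0 < pY y →
      ∀ d ∈ Set.Ioo (0 : ℝ) 1,
        pY y * Real.log d + PXi * pcondi y * Real.log (1 - d) ≤
          pY y * Real.log (pY y / (pY y + PXi * pcondi y)) +
            PXi * pcondi y *
              Real.log (1 - pY y / (pY y + PXi * pcondi y)) := by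
  refine Filter.Eventually.of_forall fun y hy d hd => ?_
  have hb : 0 ≤ PXi * pcondi y := mul_nonneg hPXi.le (hpcond y)
  exact Real.mul_log_add_mul_log_one_sub_le hy.le hb (by positivity) hd.1 hd.2

/-- For each codeword `xᵢ` with `P_X(xᵢ) > 0`, the integrand of
`Jᵢ(D) = E_{p_Y}[log D(xᵢ,y)] + P_X(xᵢ) E_{p_{Y|X}(·|xᵢ)}[log(1-D(xᵢ,y))]`
is maximized pointwise, a.e. where `p_Y(y) > 0`, by
`D*(xᵢ,y) = p_Y(y)/(p_Y(y) + P_X(xᵢ) p_{Y|X}(y|xᵢ))`. -/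
theorem stmt_8 {Y : Type*} [MeasurableSpace Y] (ν : Measure Y)
    (pY pcondi : Y → ℝ) (PXi : ℝ) (hPXi : 0 < PXi)
    (hpY : ∀ y, 0 ≤ pY y) (hpcond : ∀ y, 0 ≤ pcondi y) :
    ∀ᵐ y ∂ν, 0 < pY y →
      ∀ d ∈ Set.Ioo (0 : ℝ) 1,
        pY y * Real.log d + PXi * pcondi y * Real.log (1 - d) ≤
          pY y * Real.log (pY y / (pY y + PXi * pcondi y)) +
            PXi * pcondi y *
              Real.log (1 - pY y / (pY y + PXi * pcondi y)) :=
  stmt_8_general ν pY pcondi PXi hPXi hpcond
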